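/- arXiv:1106.1835 — 3 statements merged into one kernel-verified Lean document; each statement's English description precedes it below -/
import Mathlib

section
/- Let N and n be positive integers, u an n×n real (or complex) matrix, and m, x ∈ ℕⁿ with m₁+⋯+m_n + x₁+⋯+x_n ≤ N. Then the terminating Euler-type transformation holds: F₁^(n)(−m;−x;−N;u) = [(Σ_i x_i − N)_{Σ_i m_i} / (−N)_{Σ_i m_i}] · F₁^(n)(−m;−x; N+1−Σ_i(x_i+m_i); 1−u), where 1−u denotes the matrix with entries 1−u_{ij}, and F₁^(n)(−m;−x;c;v) for a scalar third parameter c is defined by the same terminating sum with (−N)_{Σk_{ij}} replaced by (c)_{Σk_{ij}} in the denominator. -/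
/-- The Pochhammer symbol `(a)ᵣ = a(a+1)⋯(a+r-1)`. -/
noncomputable def poch (a : ℝ) (r : ℕ) : ℝ := Polynomial.eval a (ascPochhammer ℝ r)

/-- The terminating Gelfand–Aomoto hypergeometric sum `F₁⁽ⁿ⁾(-m;-x;c;u)` with a
scalar third parameter `c`: the sum runs over all `n × n` matrices `(k_{ij})` of
nonnegative integers for which every term has nonzero numerator Pochhammers,
i.e. `∑_j k_{ij} ≤ m_i` and `∑_j k_{ji} ≤ x_i` for all `i` (for `c = -N` with
`∑m + ∑x ≤ N` this automatically restricts the sum to `∑_{i,j} k_{ij} ≤ N`). -/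
noncomputable def F1 (n : ℕ) (c : ℝ) (m x : Fin n → ℕ) (u : Fin n → Fin n → ℝ) : ℝ :=
  ∑ k ∈ Finset.filter
      (fun k => (∀ i, ∑ j, k i j ≤ m i) ∧ (∀ i, ∑ j, k j i ≤ x i))
      (Fintype.piFinset fun _ : Fin n => Fintype.piFinset fun _ : Fin n =>
        Finset.range ((∑ i, m i) + 1)),
    ((∏ i, poch (-(m i : ℝ)) (∑ j, k i j)) * ∏ i, poch (-(x i : ℝ)) (∑ j, k j i)) /
      ((∏ i, ∏ j, ((k i j).factorial : ℝ)) * poch c (∑ i, ∑ j, k i j)) *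
      ∏ i, ∏ j, u i j ^ k i j

open Finset Polynomial
open scoped Nat

/-! Both sides are polynomials in `u`; write `c_γ(w)` for the coefficient of `∏ u_p ^ w_p` in
`F₁(-m;-x;γ;u)` and compare coefficients. Expanding every `(1 - u_p) ^ w_p` binomially, the
coefficient of `u^l` on the right is `(-1)^|l| ∑_s c_γ(l + s) ∏_p binom(l_p + s_p, l_p)`, and
`(a)_{p+q} = (a)_p (a+p)_q` factors each summand as `c_γ(l)` times the coefficient at `s` of an
`F₁` with the residual margins `m - R(l)`, `x - C(l)` (row and column sums) and parameter
`γ + |l|`. The sum over `s` is therefore an `F₁` at the all-ones matrix; grouping `s` by its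
total `r` and using `∑_{|s|=r} ∏(α_i)_{R_i} ∏(β_j)_{C_j} / s! = (∑α)_r (∑β)_r / r!` reduces it
to Chu–Vandermonde. What is left is an identity between factorials. -/

lemma poch_zero (a : ℝ) : poch a 0 = 1 := by simp [poch]

lemma poch_succ (a : ℝ) (r : ℕ) : poch a (r + 1) = poch a r * (a + r) :=
  ascPochhammer_succ_eval r a

lemma poch_add (a : ℝ) (p q : ℕ) : poch a (p + q) = poch a p * poch (a + p) q := by
  simp [poch, ← ascPochhammer_mul, eval_comp]

lemma poch_pos {a : ℝ} (ha : 0 < a) (r : ℕ) : 0 < poch a r := ascPochhammer_pos r a ha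

lemma poch_ne_zero_of_le {c : ℝ} {j A : ℕ} (hc : poch c A ≠ 0) (hj : j ≤ A) : poch c j ≠ 0 := by
  obtain ⟨t, rfl⟩ := Nat.exists_eq_add_of_le hj
  exact left_ne_zero_of_mul (poch_add c j t ▸ hc)

lemma poch_neg_natCast (m r : ℕ) : poch (-(m : ℝ)) r = (-1) ^ r * m.descFactorial r := by
  rw [poch, ascPochhammer_eval_neg_eq_descPochhammer, descPochhammer_eval_eq_descFactorial]

lemma poch_neg_natCast_eq_zero {m r : ℕ} (h : m < r) : poch (-(m : ℝ)) r = 0 := by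
  simp [poch_neg_natCast, Nat.descFactorial_eq_zero_iff_lt.mpr h]

lemma poch_neg_natCast_of_le {n k : ℕ} (h : k ≤ n) :
    poch (-(n : ℝ)) k = (-1) ^ k * (n ! / (n - k)! : ℝ) := by
  rw [poch_neg_natCast, ← Nat.factorial_mul_descFactorial h]
  push_cast
  field_simp

lemma poch_neg_natCast_ne_zero {n k : ℕ} (h : k ≤ n) : poch (-(n : ℝ)) k ≠ 0 := by
  rw [poch_neg_natCast_of_le h]
  positivity

lemma poch_natCast_add_one (d k : ℕ) : poch ((d : ℝ) + 1) k = ((d + k)! / d ! : ℝ) := by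
  rw [← Nat.factorial_mul_ascFactorial, poch, ← Nat.cast_add_one, ← Nat.cast_ascFactorial]
  push_cast
  field_simp

lemma poch_neg_sub_add_one (b : ℝ) (j : ℕ) : poch (-b - j + 1) j = (-1) ^ j * poch b j := by
  rw [poch, poch, ← descPochhammer_eval_eq_ascPochhammer, ← neg_neg b,
    ascPochhammer_eval_neg_eq_descPochhammer, neg_neg, ← mul_assoc, ← pow_add, ← two_mul,
    pow_mul, neg_one_sq, one_pow, one_mul]

lemma prod_poch_neg_add {ι : Type*} [Fintype ι] {m R S : ι → ℕ} (h : R ≤ m) :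
    ∏ i, poch (-(m i : ℝ)) ((R + S) i)
      = (∏ i, poch (-(m i : ℝ)) (R i)) * ∏ i, poch (-((m - R) i : ℝ)) (S i) := by
  rw [← prod_mul_distrib]
  refine prod_congr rfl fun i _ => ?_
  rw [Pi.add_apply, poch_add, Pi.sub_apply, Nat.cast_sub (h i)]
  ring_nf

-- Chu–Vandermonde, read off from the falling-factorial version `Ring.descPochhammer_smeval_add`.
lemma poch_sub_eq_sum_choose (b c : ℝ) (A : ℕ) :
    poch (c - b) A = ∑ j ∈ range (A + 1),
      (A.choose j : ℝ) * (-1) ^ j * poch b j * poch (c + j) (A - j) := by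
  have hdesc (r : ℝ) (k : ℕ) : (descPochhammer ℤ k).smeval r = poch (r - k + 1) k := by
    rw [descPochhammer_smeval_eq_ascPochhammer, ascPochhammer_smeval_eq_eval]; rfl
  have := Ring.descPochhammer_smeval_add A (Commute.all (-b) (c + A - 1))
  rw [hdesc, Nat.sum_antidiagonal_eq_sum_range_succ_mk] at this
  convert this using 1
  · ring_nf
  refine sum_congr rfl fun j hj => ?_
  have hjA : j ≤ A := Nat.lt_succ_iff.mp (mem_range.mp hj)
  rw [hdesc, hdesc, poch_neg_sub_add_one, Nat.cast_sub hjA]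
  ring_nf

lemma sum_range_poch_neg_mul_poch_div (A : ℕ) (b c : ℝ) (hc : poch c A ≠ 0) :
    ∑ j ∈ range (A + 1), poch (-(A : ℝ)) j * poch b j / ((j ! : ℝ) * poch c j)
      = poch (c - b) A / poch c A := by
  rw [eq_div_iff hc, sum_mul, poch_sub_eq_sum_choose]
  refine sum_congr rfl fun j hj => ?_
  have hjA : j ≤ A := Nat.lt_succ_iff.mp (mem_range.mp hj)
  have hcj := poch_ne_zero_of_le hc hjA
  rw [poch_neg_natCast, Nat.descFactorial_eq_factorial_mul_choose,
    ← Nat.add_sub_cancel' hjA, poch_add, Nat.add_sub_cancel_left]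
  push_cast
  field_simp

-- Both sides equal `(-1)^M (M+d)! (M+X+d)! / (d! (X+d)!)`.
lemma poch_neg_mul_poch_neg_mul_poch (M X d lam : ℕ) (h : lam ≤ M) :
    poch (-((M + d : ℕ) : ℝ)) M * (-1) ^ lam * poch (-((M + X + d : ℕ) : ℝ)) lam
        * poch (((X + d : ℕ) : ℝ) + 1) (M - lam)
      = poch (-((M + X + d : ℕ) : ℝ)) M * poch ((d : ℝ) + 1) M := by
  rw [poch_neg_natCast_of_le (by omega), poch_neg_natCast_of_le (by omega),
    poch_neg_natCast_of_le (by omega), poch_natCast_add_one, poch_natCast_add_one,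
    show M + d - M = d by omega, show M + X + d - M = X + d by omega,
    show X + d + (M - lam) = M + X + d - lam by omega, add_comm d M]
  field_simp
  rw [← pow_mul, mul_comm, pow_mul, neg_one_sq, one_pow]

lemma sub_single_add_single {α : Type*} [DecidableEq α] {s : α → ℕ} {p : α} (h : s p ≠ 0) :
    s - Pi.single p 1 + Pi.single p 1 = s := by
  ext q
  rcases eq_or_ne q p with rfl | hq
  · simp only [Pi.add_apply, Pi.sub_apply, Pi.single_eq_same]; omega
  · simp [hq]

section MultiIndex

variable {α : Type*} [Fintype α] [DecidableEq α]

lemma sum_piAntidiag_succ_mul_apply (r : ℕ) (p : α) (f : (α → ℕ) → ℝ) :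
    ∑ s ∈ univ.piAntidiag (r + 1), (s p : ℝ) * f s
      = ∑ s ∈ univ.piAntidiag r, ((s p : ℝ) + 1) * f (s + Pi.single p 1) := by
  have hsum (s : α → ℕ) : univ.sum (s + Pi.single p 1) = univ.sum s + 1 := by
    simp [sum_add_distrib]
  rw [← sum_filter_of_ne (p := fun s => s p ≠ 0) fun s _ h hsp => h (by simp [hsp])]
  refine sum_nbij' (fun s => s - Pi.single p 1) (fun s => s + Pi.single p 1) ?_ ?_ ?_ ?_ ?_
  · intro s hs
    simp only [mem_filter, mem_piAntidiag, mem_univ, implies_true, and_true] at hs ⊢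
    have := hsum (s - Pi.single p 1)
    rw [sub_single_add_single hs.2] at this
    omega
  · intro s hs
    simp only [mem_filter, mem_piAntidiag, mem_univ, implies_true, and_true] at hs ⊢
    rw [hsum, hs]
    simp
  · intro s hs
    exact sub_single_add_single (mem_filter.mp hs).2
  · intro s _
    ext q
    simp
  · intro s hs
    have hsp := (mem_filter.mp hs).2
    rw [sub_single_add_single hsp]
    simp only [Pi.sub_apply, Pi.single_eq_same]
    rw [Nat.cast_sub (Nat.one_le_iff_ne_zero.mpr hsp)]
    ring

lemma prod_add_single_one {M : Type*} [CommMonoid M] (g : α → ℕ → M) (s : α → ℕ) (p : α) {t : M}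
    (hg : g p (s p + 1) = g p (s p) * t) :
    ∏ q, g q ((s + Pi.single p 1 : α → ℕ) q) = (∏ q, g q (s q)) * t := by
  rw [← mul_prod_erase _ _ (mem_univ p), ← mul_prod_erase univ (fun q => g q (s q)) (mem_univ p)]
  rw [prod_congr rfl fun q hq => by
    rw [Pi.add_apply, Pi.single_eq_of_ne (ne_of_mem_erase hq), add_zero]]
  simp [hg, mul_right_comm]

lemma prod_one_add_pow_eq_sum_Iic {R : Type*} [CommSemiring R] (y : α → R) (w : α → ℕ) :
    ∏ p, (1 + y p) ^ w p = ∑ l ∈ Iic w, ∏ p, ((w p).choose (l p) : R) * y p ^ l p := by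
  simp_rw [add_comm (1 : R), add_pow, one_pow, mul_one]
  rw [prod_univ_sum]
  refine sum_congr ?_ fun l _ => prod_congr rfl fun p _ => mul_comm _ _
  ext l
  simp [Pi.le_def]

lemma sum_Iic_mul_prod_one_sub_pow {K : α → ℕ} (f : (α → ℕ) → ℝ) (hf : ∀ w, f w ≠ 0 → w ≤ K)
    (v : α → ℝ) :
    ∑ w ∈ Iic K, f w * ∏ p, (1 - v p) ^ w p
      = ∑ l ∈ Iic K, (-1) ^ (∑ p, l p) *
          (∑ s ∈ Iic K, f (l + s) * ∏ p, ((l p + s p).choose (l p) : ℝ)) * ∏ p, v p ^ l p := by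
  have hexp (w : α → ℕ) : ∏ p, (1 - v p) ^ w p
      = ∑ l ∈ Iic w, (-1) ^ (∑ p, l p) * (∏ p, ((w p).choose (l p) : ℝ)) * ∏ p, v p ^ l p := by
    simp_rw [sub_eq_add_neg, prod_one_add_pow_eq_sum_Iic]
    refine sum_congr rfl fun l _ => ?_
    simp_rw [neg_pow (v _), prod_mul_distrib, prod_pow_eq_pow_sum]
    ring
  classical
  simp_rw [hexp, mul_sum, sum_mul]
  rw [← sum_finset_product' ((Iic K ×ˢ Iic K).filter fun q => q.2 ≤ q.1) _ _ (f := fun w l =>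
      f w * ((-1) ^ (∑ p, l p) * (∏ p, ((w p).choose (l p) : ℝ)) * ∏ p, v p ^ l p)) fun q => by
      simp only [mem_filter, mem_product, mem_Iic]
      exact ⟨fun h => ⟨h.1.1, h.2⟩, fun h => ⟨⟨h.1, h.2.trans h.1⟩, h.2⟩⟩,
    ← sum_product']
  symm
  refine sum_bij_ne_zero (fun q _ _ => (q.1 + q.2, q.1)) ?_ ?_ ?_ ?_
  · intro q _ hq
    have hfq : f (q.1 + q.2) ≠ 0 := fun h => hq (by simp [h])
    simpa [hf _ hfq] using le_self_add.trans (hf _ hfq)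
  · intro q _ _ q' _ _ h
    simp only [Prod.mk.injEq] at h
    exact Prod.ext h.2 (add_left_cancel (h.2 ▸ h.1))
  · intro q hq hq0
    simp only [mem_filter, mem_product, mem_Iic] at hq
    refine ⟨(q.2, q.1 - q.2), ?_, ?_, ?_⟩
    · simp only [mem_product, mem_Iic]
      exact ⟨hq.2.trans hq.1.1, tsub_le_self.trans hq.1.1⟩
    · have hadd (p : α) : q.2 p + (q.1 - q.2) p = q.1 p := Nat.add_sub_cancel' (hq.2 p)
      simp only [add_tsub_cancel_of_le hq.2, hadd]
      exact fun h => hq0 (by linear_combination h)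
    · simp [add_tsub_cancel_of_le hq.2]
  · intro q _ _
    simp only [Pi.add_apply]
    ring

end MultiIndex

section RowCol

variable {ι κ : Type*}

def rowSums [Fintype κ] (s : ι × κ → ℕ) (i : ι) : ℕ := ∑ j, s (i, j)

def colSums [Fintype ι] (s : ι × κ → ℕ) (j : κ) : ℕ := ∑ i, s (i, j)

lemma rowSums_add [Fintype κ] (l s : ι × κ → ℕ) : rowSums (l + s) = rowSums l + rowSums s := by
  ext i; simp [rowSums, sum_add_distrib]

lemma colSums_add [Fintype ι] (l s : ι × κ → ℕ) : colSums (l + s) = colSums l + colSums s := by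
  ext j; simp [colSums, sum_add_distrib]

lemma rowSums_single [Fintype κ] [DecidableEq ι] [DecidableEq κ] (p : ι × κ) :
    rowSums (Pi.single p 1) = Pi.single p.1 1 := by
  ext i
  rcases eq_or_ne i p.1 with rfl | h
  · simp [rowSums, Pi.single_apply, Prod.ext_iff]
  · simp [rowSums, Prod.ext_iff, h]

lemma colSums_single [Fintype ι] [DecidableEq ι] [DecidableEq κ] (p : ι × κ) :
    colSums (Pi.single p 1) = Pi.single p.2 1 := by
  ext j
  rcases eq_or_ne j p.2 with rfl | h
  · simp [colSums, Pi.single_apply, Prod.ext_iff]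
  · simp [colSums, Prod.ext_iff, h]

variable [Fintype ι] [Fintype κ]

lemma sum_rowSums (s : ι × κ → ℕ) : ∑ i, rowSums s i = ∑ p, s p :=
  (Fintype.sum_prod_type s).symm

lemma sum_colSums (s : ι × κ → ℕ) : ∑ j, colSums s j = ∑ p, s p := by
  rw [Fintype.sum_prod_type, sum_comm]; rfl

variable [DecidableEq ι] [DecidableEq κ]

lemma succ_mul_prod_poch_div_add_single (a : ι → ℝ) (b : κ → ℝ) (p : ι × κ) (s : ι × κ → ℕ) :
    ((s p : ℝ) + 1) * ((∏ i, poch (a i) (rowSums (s + Pi.single p 1) i))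
        * (∏ j, poch (b j) (colSums (s + Pi.single p 1) j))
        / ∏ q, (((s + Pi.single p 1 : ι × κ → ℕ) q)! : ℝ))
      = (a p.1 + rowSums s p.1) * (b p.2 + colSums s p.2)
        * ((∏ i, poch (a i) (rowSums s i)) * (∏ j, poch (b j) (colSums s j))
          / ∏ q, ((s q)! : ℝ)) := by
  simp only [rowSums_add, colSums_add, rowSums_single, colSums_single]
  rw [prod_add_single_one (fun i n => poch (a i) n) (rowSums s) p.1 (poch_succ _ _),
    prod_add_single_one (fun j n => poch (b j) n) (colSums s) p.2 (poch_succ _ _),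
    prod_add_single_one (fun _ n => ((n ! : ℕ) : ℝ)) s p (t := (s p : ℝ) + 1)
      (by push_cast [Nat.factorial_succ]; ring)]
  field_simp

-- Writing `r + 1 = ∑_p s_p` and shifting `s ↦ s + e_p` turns the left side `G r` into the
-- recurrence `(r + 1) G (r + 1) = (∑ a + r) (∑ b + r) G r`.
lemma sum_piAntidiag_prod_poch_rowSums_colSums (a : ι → ℝ) (b : κ → ℝ) (r : ℕ) :
    ∑ s ∈ univ.piAntidiag r,
      (∏ i, poch (a i) (rowSums s i)) * (∏ j, poch (b j) (colSums s j)) / ∏ p, ((s p)! : ℝ)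
      = poch (∑ i, a i) r * poch (∑ j, b j) r / r ! := by
  set g : (ι × κ → ℕ) → ℝ := fun s =>
    (∏ i, poch (a i) (rowSums s i)) * (∏ j, poch (b j) (colSums s j)) / ∏ p, ((s p)! : ℝ)
  induction r with
  | zero => simp [g, rowSums, colSums, poch_zero]
  | succ r ih =>
    have hsum (s : ι × κ → ℕ) (hs : s ∈ univ.piAntidiag r) :
        ∑ p : ι × κ, (a p.1 + rowSums s p.1) * (b p.2 + colSums s p.2)
          = ((∑ i, a i) + r) * ((∑ j, b j) + r) := by
      have hr : ∑ p, s p = r := (mem_piAntidiag.mp hs).1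
      rw [Fintype.sum_prod_type' fun i j => (a i + rowSums s i) * (b j + colSums s j),
        ← sum_mul_sum, sum_add_distrib, sum_add_distrib, ← Nat.cast_sum, ← Nat.cast_sum,
        sum_rowSums, sum_colSums, hr]
    have step : ((r : ℝ) + 1) * ∑ s ∈ univ.piAntidiag (r + 1), g s
        = ((∑ i, a i) + r) * ((∑ j, b j) + r) * ∑ s ∈ univ.piAntidiag r, g s :=
      calc ((r : ℝ) + 1) * ∑ s ∈ univ.piAntidiag (r + 1), g s
          = ∑ p, ∑ s ∈ univ.piAntidiag (r + 1), (s p : ℝ) * g s := by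
            rw [mul_sum, sum_comm]
            refine sum_congr rfl fun s hs => ?_
            rw [← sum_mul, ← Nat.cast_sum, (mem_piAntidiag.mp hs).1]
            push_cast; ring
        _ = ∑ s ∈ univ.piAntidiag r, ∑ p : ι × κ,
              (a p.1 + rowSums s p.1) * (b p.2 + colSums s p.2) * g s := by
            simp_rw [sum_piAntidiag_succ_mul_apply, g, succ_mul_prod_poch_div_add_single]
            exact sum_comm
        _ = _ := by
            rw [mul_sum]
            exact sum_congr rfl fun s hs => by rw [← sum_mul, hsum s hs]
    rw [ih] at step
    rw [poch_succ, poch_succ, Nat.factorial_succ]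
    push_cast
    field_simp at step ⊢
    linear_combination step

end RowCol

namespace F1

variable {ι κ : Type*} [Fintype ι] [Fintype κ]

noncomputable def coeff (m : ι → ℕ) (x : κ → ℕ) (c : ℝ) (w : ι × κ → ℕ) : ℝ :=
  (∏ i, poch (-(m i : ℝ)) (rowSums w i)) * (∏ j, poch (-(x j : ℝ)) (colSums w j)) /
    ((∏ p, ((w p)! : ℝ)) * poch c (∑ p, w p))

section Support

variable {m : ι → ℕ} {x : κ → ℕ} {c : ℝ} {w : ι × κ → ℕ}

lemma rowSums_le_of_coeff_ne_zero (h : coeff m x c w ≠ 0) : rowSums w ≤ m := by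
  intro i
  by_contra! hi
  have := prod_eq_zero (f := fun i => poch (-(m i : ℝ)) (rowSums w i)) (mem_univ i)
    (poch_neg_natCast_eq_zero hi)
  exact h (by simp [coeff, this])

lemma colSums_le_of_coeff_ne_zero (h : coeff m x c w ≠ 0) : colSums w ≤ x := by
  intro j
  by_contra! hj
  have := prod_eq_zero (f := fun j => poch (-(x j : ℝ)) (colSums w j)) (mem_univ j)
    (poch_neg_natCast_eq_zero hj)
  exact h (by simp [coeff, this])

lemma le_sum_of_coeff_ne_zero (h : coeff m x c w ≠ 0) (p : ι × κ) : w p ≤ ∑ i, m i :=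
  calc w p ≤ rowSums w p.1 := single_le_sum (f := fun j => w (p.1, j)) (by simp) (mem_univ p.2)
    _ ≤ m p.1 := rowSums_le_of_coeff_ne_zero h p.1
    _ ≤ ∑ i, m i := single_le_sum (by simp) (mem_univ p.1)

lemma coeff_eq_mul_div_poch {c' : ℝ} (hc' : poch c' (∑ p, w p) ≠ 0) :
    coeff m x c w = coeff m x c' w * (poch c' (∑ p, w p) / poch c (∑ p, w p)) := by
  simp only [coeff]
  field_simp

lemma coeff_add_eq_zero_of_not_le {l : ι × κ → ℕ} (hl : ¬(rowSums l ≤ m ∧ colSums l ≤ x))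
    (s : ι × κ → ℕ) : coeff m x c (l + s) = 0 := by
  by_contra h
  refine hl ⟨le_trans ?_ (rowSums_le_of_coeff_ne_zero h),
    le_trans ?_ (colSums_le_of_coeff_ne_zero h)⟩
  · rw [rowSums_add]; exact le_self_add
  · rw [colSums_add]; exact le_self_add

end Support

lemma coeff_add_mul_prod_choose {m : ι → ℕ} {x : κ → ℕ} {c : ℝ} {l : ι × κ → ℕ}
    (hrow : rowSums l ≤ m) (hcol : colSums l ≤ x) (s : ι × κ → ℕ) :
    coeff m x c (l + s) * ∏ p, ((l p + s p).choose (l p) : ℝ)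
      = coeff m x c l * coeff (m - rowSums l) (x - colSums l) (c + ∑ p, l p) s := by
  have hfac : ∏ p, (((l + s) p)! : ℝ)
      = (∏ p, ((l p + s p).choose (l p) : ℝ)) * (∏ p, ((l p)! : ℝ)) * ∏ p, ((s p)! : ℝ) := by
    rw [← prod_mul_distrib, ← prod_mul_distrib]
    refine prod_congr rfl fun p _ => ?_
    rw [Pi.add_apply, ← Nat.add_choose_mul_factorial_mul_factorial, Nat.choose_symm_add]
    push_cast; ring
  have hchoose : ∏ p, ((l p + s p).choose (l p) : ℝ) ≠ 0 :=
    prod_ne_zero_iff.mpr fun p _ => Nat.cast_ne_zero.mpr (Nat.choose_pos (by omega)).ne'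
  simp only [coeff]
  rw [rowSums_add, colSums_add, prod_poch_neg_add hrow, prod_poch_neg_add hcol, hfac,
    show ∑ p, (l + s) p = ∑ p, l p + ∑ p, s p from sum_add_distrib, poch_add]
  push_cast
  field_simp

variable [DecidableEq ι] [DecidableEq κ]

lemma sum_piAntidiag_coeff (a : ι → ℕ) (b : κ → ℕ) (γ : ℝ) (r : ℕ) :
    ∑ s ∈ univ.piAntidiag r, coeff a b γ s
      = poch (-(∑ i, a i : ℕ)) r * poch (-∑ j, (b j : ℝ)) r / ((r ! : ℝ) * poch γ r) := by
  calc ∑ s ∈ univ.piAntidiag r, coeff a b γ s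
      = (∑ s ∈ univ.piAntidiag r, (∏ i, poch (-(a i : ℝ)) (rowSums s i))
          * (∏ j, poch (-(b j : ℝ)) (colSums s j)) / ∏ p, ((s p)! : ℝ)) / poch γ r := by
        rw [sum_div]
        refine sum_congr rfl fun s hs => ?_
        rw [coeff, (mem_piAntidiag.mp hs).1, div_div]
    _ = _ := by
        rw [sum_piAntidiag_prod_poch_rowSums_colSums, sum_neg_distrib, sum_neg_distrib, div_div]
        push_cast
        rfl

lemma sum_Iic_coeff (a : ι → ℕ) (b : κ → ℕ) {γ : ℝ} (hγ : poch γ (∑ i, a i) ≠ 0)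
    {K : ι × κ → ℕ} (hK : ∀ p, ∑ i, a i ≤ K p) :
    ∑ s ∈ Iic K, coeff a b γ s = poch (γ + ∑ j, (b j : ℝ)) (∑ i, a i) / poch γ (∑ i, a i) := by
  set A := ∑ i, a i
  have hsupp (s : ι × κ → ℕ) (hs : coeff a b γ s ≠ 0) : ∑ p, s p ≤ A := by
    rw [← sum_rowSums]
    exact sum_le_sum fun i _ => rowSums_le_of_coeff_ne_zero hs i
  have hsub : (range (A + 1)).biUnion (fun r => (univ : Finset (ι × κ)).piAntidiag r)
      ⊆ Iic K := by
    intro s hs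
    obtain ⟨r, hr, hs⟩ := mem_biUnion.mp hs
    refine mem_Iic.mpr fun p => ?_
    calc s p ≤ ∑ q, s q := single_le_sum (by simp) (mem_univ p)
      _ = r := (mem_piAntidiag.mp hs).1
      _ ≤ K p := (Nat.lt_succ_iff.mp (mem_range.mp hr)).trans (hK p)
  have hdisj : (range (A + 1) : Set ℕ).PairwiseDisjoint
      fun r => (univ : Finset (ι × κ)).piAntidiag r :=
    fun r _ r' _ hrr' => disjoint_left.mpr fun s hs hs' =>
      hrr' ((mem_piAntidiag.mp hs).1.symm.trans (mem_piAntidiag.mp hs').1)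
  rw [← sum_subset hsub fun s _ hs => by
      by_contra h
      exact hs (mem_biUnion.mpr ⟨_, mem_range.mpr (Nat.lt_succ_of_le (hsupp s h)),
        mem_piAntidiag.mpr ⟨rfl, by simp⟩⟩),
    sum_biUnion hdisj]
  simp_rw [sum_piAntidiag_coeff]
  rw [sum_range_poch_neg_mul_poch_div A _ γ hγ, sub_neg_eq_add]

lemma ratio_mul_sum_coeff_add (m : ι → ℕ) (x : κ → ℕ) (d : ℕ) (l : ι × κ → ℕ) :
    poch (-((∑ i, m i + d : ℕ) : ℝ)) (∑ i, m i)
        / poch (-((∑ i, m i + ∑ j, x j + d : ℕ) : ℝ)) (∑ i, m i)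
      * ((-1) ^ (∑ p, l p) * ∑ s ∈ Iic fun _ => ∑ i, m i,
          coeff m x ((d : ℝ) + 1) (l + s) * ∏ p, ((l p + s p).choose (l p) : ℝ))
      = coeff m x (-((∑ i, m i + ∑ j, x j + d : ℕ) : ℝ)) l := by
  by_cases hl : rowSums l ≤ m ∧ colSums l ≤ x
  swap
  · have hl0 := coeff_add_eq_zero_of_not_le (c := -((∑ i, m i + ∑ j, x j + d : ℕ) : ℝ)) hl 0
    rw [add_zero] at hl0
    rw [hl0]
    simp [coeff_add_eq_zero_of_not_le hl]
  obtain ⟨hrow, hcol⟩ := hl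
  have hlamM : ∑ p, l p ≤ ∑ i, m i := sum_rowSums l ▸ sum_le_sum fun i _ => hrow i
  have hA : ∑ i, (m - rowSums l) i = ∑ i, m i - ∑ p, l p := by
    rw [← sum_rowSums, ← sum_tsub_distrib _ fun i _ => hrow i]; rfl
  have hB : (d : ℝ) + 1 + ↑(∑ p, l p) + ∑ j, (((x - colSums l) j : ℕ) : ℝ)
      = ((∑ j, x j + d : ℕ) : ℝ) + 1 := by
    simp only [Pi.sub_apply, Nat.cast_sub (hcol _), sum_sub_distrib, ← Nat.cast_sum, sum_colSums]
    push_cast; ring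
  have hγ : (0 : ℝ) < d + 1 + ↑(∑ p, l p) := by positivity
  rw [sum_congr rfl fun s _ => coeff_add_mul_prod_choose hrow hcol s, ← mul_sum,
    sum_Iic_coeff _ _ (poch_pos hγ _).ne' fun _ => by rw [hA]; exact tsub_le_self, hA, hB,
    coeff_eq_mul_div_poch (c := (d : ℝ) + 1) (c' := -((∑ i, m i + ∑ j, x j + d : ℕ) : ℝ))
      (poch_neg_natCast_ne_zero (by omega))]
  have key := poch_neg_mul_poch_neg_mul_poch (∑ i, m i) (∑ j, x j) d (∑ p, l p) hlamM
  have hsplit : poch ((d : ℝ) + 1) (∑ i, m i)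
      = poch ((d : ℝ) + 1) (∑ p, l p) * poch ((d : ℝ) + 1 + ↑(∑ p, l p)) (∑ i, m i - ∑ p, l p) := by
    rw [← poch_add, Nat.add_sub_cancel' hlamM]
  rw [hsplit] at key
  have hN := poch_neg_natCast_ne_zero (n := ∑ i, m i + ∑ j, x j + d) (k := ∑ i, m i) (by omega)
  have h₁ := (poch_pos (a := (d : ℝ) + 1) (by positivity) (∑ p, l p)).ne'
  have h₂ := (poch_pos hγ (∑ i, m i - ∑ p, l p)).ne'
  field_simp
  linear_combination coeff m x (-((∑ i, m i + ∑ j, x j + d : ℕ) : ℝ)) l * key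

end F1

lemma F1_eq_sum_Iic_coeff (n : ℕ) (c : ℝ) (m x : Fin n → ℕ) (u : Fin n → Fin n → ℝ) :
    F1 n c m x u = ∑ w ∈ Iic fun _ => ∑ i, m i, F1.coeff m x c w * ∏ p, u p.1 p.2 ^ w p := by
  classical
  rw [F1, ← sum_filter_of_ne (p := fun w => rowSums w ≤ m ∧ colSums w ≤ x) fun w _ hw =>
    ⟨F1.rowSums_le_of_coeff_ne_zero (left_ne_zero_of_mul hw),
      F1.colSums_le_of_coeff_ne_zero (left_ne_zero_of_mul hw)⟩]
  refine sum_equiv (Equiv.curry _ _ _).symm (fun k => ?_) (fun k _ => ?_)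
  · simp [Pi.le_def, rowSums, colSums]
  · simp [F1.coeff, rowSums, colSums, Fintype.prod_prod_type, Fintype.sum_prod_type]

theorem stmt_12_general (N n : ℕ)
    (u : Fin n → Fin n → ℝ) (m x : Fin n → ℕ)
    (hmx : (∑ i, m i) + (∑ i, x i) ≤ N) :
    F1 n (-(N : ℝ)) m x u
      = poch ((∑ i, (x i : ℝ)) - N) (∑ i, m i) / poch (-(N : ℝ)) (∑ i, m i) *
        F1 n ((N : ℝ) + 1 - ∑ i, ((x i : ℝ) + (m i : ℝ))) m x (fun i j => 1 - u i j) := by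
  obtain ⟨d, rfl⟩ := Nat.exists_eq_add_of_le hmx
  have hc : ((∑ i, m i + ∑ i, x i + d : ℕ) : ℝ) + 1 - ∑ i, ((x i : ℝ) + m i) = d + 1 := by
    push_cast [sum_add_distrib]; ring
  have hr : ∑ i, (x i : ℝ) - ((∑ i, m i + ∑ i, x i + d : ℕ) : ℝ) = -((∑ i, m i + d : ℕ) : ℝ) := by
    push_cast; ring
  rw [hc, hr, F1_eq_sum_Iic_coeff, F1_eq_sum_Iic_coeff,
    sum_Iic_mul_prod_one_sub_pow _ (fun _ hw => F1.le_sum_of_coeff_ne_zero hw)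
      (fun p => u p.1 p.2), mul_sum]
  refine sum_congr rfl fun l _ => ?_
  rw [← F1.ratio_mul_sum_coeff_add]
  ring

/-- The terminating Euler-type transformation (2.3):
`F₁⁽ⁿ⁾(-m;-x;-N;u) = [(∑x - N)_{∑m}/(-N)_{∑m}] F₁⁽ⁿ⁾(-m;-x;N+1-∑(x+m);1-u)`. -/
theorem stmt_12 (N n : ℕ) (hN : 0 < N) (hn : 0 < n)
    (u : Fin n → Fin n → ℝ) (m x : Fin n → ℕ)
    (hmx : (∑ i, m i) + (∑ i, x i) ≤ N) :
    F1 n (-(N : ℝ)) m x u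
      = poch ((∑ i, (x i : ℝ)) - N) (∑ i, m i) / poch (-(N : ℝ)) (∑ i, m i) *
        F1 n ((N : ℝ) + 1 - ∑ i, ((x i : ℝ) + (m i : ℝ))) m x (fun i j => 1 - u i j) :=
  stmt_12_general N n u m x hmx
end

section
/- Let N and n be positive integers, 0 < α_r < 1 for r = 1,…,n, and β_r > 0 with β₁+⋯+β_n < 1. Then for all states x, y ∈ ℕⁿ with Σx_r ≤ N and Σy_r ≤ N, the multivariable kernel admits the hypergeometric form: K(x;y) = b_n(x;N;β) · ∏_{k=1}^n (1−α_k)^{y_k} · Σ_{r∈ℕⁿ, Σr_i ≤ N} [∏_{i=1}^n (−x_i)_{r_i}(−y_i)_{r_i}/r_i!] / (−N)_{Σ_i r_i} · ∏_{i=1}^n [α_i/(β_i(α_i−1))]^{r_i}. -/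
/-- The binomial distribution `b(k;n;p) = C(n,k) p^k (1-p)^(n-k)`. -/
noncomputable def binom (n k : ℕ) (p : ℝ) : ℝ :=
  (n.choose k : ℝ) * p ^ k * (1 - p) ^ (n - k)

/-- The multinomial distribution
`b_n(x;N;η) = N!/(x₁!⋯x_n!(N-∑x)!) ∏ ηᵢ^{xᵢ} (1-∑η)^{N-∑x}`. -/
noncomputable def bn {n : ℕ} (N : ℕ) (x : Fin n → ℕ) (η : Fin n → ℝ) : ℝ :=
  (N.factorial : ℝ) / ((∏ i, ((x i).factorial : ℝ)) * ((N - ∑ i, x i).factorial : ℝ))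
    * (∏ i, η i ^ x i) * (1 - ∑ i, η i) ^ (N - ∑ i, x i)

/-- The multivariable cumulative Bernoulli trial transition kernel:
`K(j;i) = ∑_{k, k_r ≤ min(i_r,j_r)} (∏_r b(k_r;i_r;α_r)) b_n(j-k;N-∑k;β)`,
the probability of moving from state `i` to state `j`. -/
noncomputable def Kn {n : ℕ} (N : ℕ) (α β : Fin n → ℝ) (j i : Fin n → ℕ) : ℝ :=
  ∑ k ∈ Fintype.piFinset (fun r => Finset.range (min (i r) (j r) + 1)),
    (∏ r, binom (i r) (k r) (α r)) * bn (N - ∑ r, k r) (fun r => j r - k r) β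

lemma poch_neg_nat (m k : ℕ) : poch (-(m:ℝ)) k = (-1:ℝ)^k * (m.descFactorial k : ℝ) := by
  rw [poch, ascPochhammer_eval_neg_eq_descPochhammer, descPochhammer_eval_eq_descFactorial]

lemma poch_neg_zero {m k : ℕ} (h : m < k) : poch (-(m:ℝ)) k = 0 := by
  rw [poch_neg_nat, Nat.descFactorial_eq_zero_iff_lt.mpr h]; simp

lemma sgn_sq (k : ℕ) : ((-1:ℝ))^k * (-1:ℝ)^k = 1 := by
  rw [← mul_pow]; norm_num

lemma per_lemma (x y k : ℕ) (hkx : k ≤ x) (hky : k ≤ y) {a b : ℝ}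
    (ha : 1 - a ≠ 0) (hb : b ≠ 0) :
    b^x / (x.factorial : ℝ) * (1-a)^y
        * (poch (-(x:ℝ)) k * poch (-(y:ℝ)) k / (k.factorial : ℝ))
        * (a/(b*(a-1)))^k
      = (-1:ℝ)^k * (binom y k a * (b ^ (x-k)) / ((x-k).factorial : ℝ)) := by
  have hq : a/(b*(a-1)) = -(a/(b*(1-a))) := by
    rw [show a - 1 = -(1-a) by ring, mul_neg, div_neg]
  rw [hq, neg_pow, poch_neg_nat, poch_neg_nat, binom]
  have hfx : ((x.factorial : ℕ) : ℝ) = ((x-k).factorial : ℝ) * (x.descFactorial k : ℝ) := by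
    rw [← Nat.cast_mul, Nat.factorial_mul_descFactorial hkx]
  have hDy : ((y.descFactorial k : ℕ) : ℝ) = (k.factorial : ℝ) * (y.choose k : ℝ) := by
    rw [← Nat.cast_mul, Nat.descFactorial_eq_factorial_mul_choose]
  have hbx : b^x = b^(x-k) * b^k := by rw [← pow_add, Nat.sub_add_cancel hkx]
  have hay : (1-a)^y = (1-a)^(y-k) * (1-a)^k := by rw [← pow_add, Nat.sub_add_cancel hky]
  have h2 : ((-1:ℝ)^k * (x.descFactorial k : ℝ)) * ((-1:ℝ)^k * (y.descFactorial k : ℝ))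
      = (x.descFactorial k : ℝ) * (y.descFactorial k : ℝ) := by
    rw [mul_mul_mul_comm, sgn_sq, one_mul]
  rw [h2, hDy, hbx, hay, div_pow, mul_pow]
  have hk0 : (k.factorial : ℝ) ≠ 0 := Nat.cast_ne_zero.mpr (Nat.factorial_ne_zero k)
  have hxk0 : ((x-k).factorial : ℝ) ≠ 0 := Nat.cast_ne_zero.mpr (Nat.factorial_ne_zero _)
  have hbk : b^k ≠ 0 := pow_ne_zero _ hb
  have hak : (1-a)^k ≠ 0 := pow_ne_zero _ ha
  have hdx0 : ((x.descFactorial k : ℕ) : ℝ) ≠ 0 :=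
    Nat.cast_ne_zero.mpr (by simpa [Nat.descFactorial_eq_zero_iff_lt, not_lt] using hkx)
  rw [hfx]
  field_simp

lemma term_eq (N n : ℕ) (α β : Fin n → ℝ) (hα : ∀ r, 0 < α r ∧ α r < 1) (hβ : ∀ r, 0 < β r)
    (x y k : Fin n → ℕ) (hx : ∑ r, x r ≤ N)
    (hkx : ∀ i, k i ≤ x i) (hky : ∀ i, k i ≤ y i) :
    (∏ r, binom (y r) (k r) (α r)) * bn (N - ∑ r, k r) (fun r => x r - k r) β
      = bn N x β * (∏ r, (1 - α r) ^ y r) *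
          ((∏ i, poch (-(x i : ℝ)) (k i) * poch (-(y i : ℝ)) (k i) / ((k i).factorial : ℝ)) /
              poch (-(N : ℝ)) (∑ i, k i) *
            ∏ i, (α i / (β i * (α i - 1))) ^ k i) := by
  have hkk : ∑ i, k i ≤ ∑ i, x i := Finset.sum_le_sum (fun i _ => hkx i)
  have hkN : ∑ i, k i ≤ N := le_trans hkk hx
  have hsub : ∑ i, (x i - k i) = ∑ i, x i - ∑ i, k i :=
    Finset.sum_tsub_distrib Finset.univ (fun i _ => hkx i)
  have hE : (N - ∑ i, k i) - (∑ i, x i - ∑ i, k i) = N - ∑ i, x i := by omega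
  simp only [bn]
  rw [hsub, hE, poch_neg_nat]
  set K := ∑ i, k i with hK
  set S := (1 : ℝ) - ∑ i, β i with hS
  set A := ∏ i, (β i)^(x i) with hA
  set F := ∏ i, (((x i).factorial : ℕ) : ℝ) with hF
  set G := ∏ i, (1 - α i)^(y i) with hG
  set B := ∏ r, binom (y r) (k r) (α r) with hB
  set C := ∏ i, (β i)^(x i - k i) with hC
  set H := ∏ i, (((x i - k i).factorial : ℕ) : ℝ) with hH
  set P := ∏ i, poch (-(x i : ℝ)) (k i) * poch (-(y i : ℝ)) (k i) / (((k i).factorial : ℕ) : ℝ)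
    with hP
  set Q := ∏ i, (α i / (β i * (α i - 1)))^(k i) with hQ
  set DN := ((N.descFactorial K : ℕ) : ℝ) with hDN
  set u := (-1:ℝ)^K with hu
  -- the per-index identity assembled over the product
  have goal2 : A / F * G * P * Q = u * (B * C / H) := by
    have hLi : ∀ i : Fin n,
        (β i)^(x i) / (((x i).factorial : ℕ) : ℝ) * (1 - α i)^(y i)
            * (poch (-(x i : ℝ)) (k i) * poch (-(y i : ℝ)) (k i) / (((k i).factorial : ℕ) : ℝ))
            * (α i/(β i*(α i - 1)))^(k i)
          = (-1:ℝ)^(k i) * (binom (y i) (k i) (α i) * ((β i) ^ (x i - k i))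
              / (((x i - k i).factorial : ℕ) : ℝ)) := fun i =>
      per_lemma (x i) (y i) (k i) (hkx i) (hky i)
        (by have h1 := (hα i).2; intro h; nlinarith) (ne_of_gt (hβ i))
    have lhs_eq : A / F * G * P * Q
        = ∏ i, ((β i)^(x i) / (((x i).factorial : ℕ) : ℝ) * (1 - α i)^(y i)
            * (poch (-(x i : ℝ)) (k i) * poch (-(y i : ℝ)) (k i) / (((k i).factorial : ℕ) : ℝ))
            * (α i/(β i*(α i - 1)))^(k i)) := by
      rw [hA, hF, hG, hP, hQ, ← Finset.prod_div_distrib, ← Finset.prod_mul_distrib,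
        ← Finset.prod_mul_distrib, ← Finset.prod_mul_distrib]
    have rhs_eq : (∏ i, ((-1:ℝ)^(k i) * (binom (y i) (k i) (α i) * ((β i) ^ (x i - k i))
              / (((x i - k i).factorial : ℕ) : ℝ))))
        = u * (B * C / H) := by
      rw [hu, hK, hB, hC, hH, Finset.prod_mul_distrib, Finset.prod_pow_eq_pow_sum,
        Finset.prod_div_distrib, Finset.prod_mul_distrib]
    rw [lhs_eq, Finset.prod_congr rfl (fun i _ => hLi i), rhs_eq]
  have hNfac : ((N.factorial : ℕ) : ℝ) = (((N - K).factorial : ℕ) : ℝ) * DN := by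
    rw [hDN, ← Nat.cast_mul, Nat.factorial_mul_descFactorial hkN]
  have hDN0 : DN ≠ 0 :=
    Nat.cast_ne_zero.mpr (by simpa [Nat.descFactorial_eq_zero_iff_lt, not_lt] using hkN)
  have hu0 : u ≠ 0 := pow_ne_zero _ (by norm_num)
  have hF0 : F ≠ 0 :=
    Finset.prod_ne_zero_iff.mpr (fun i _ => Nat.cast_ne_zero.mpr (Nat.factorial_ne_zero _))
  have hH0 : H ≠ 0 :=
    Finset.prod_ne_zero_iff.mpr (fun i _ => Nat.cast_ne_zero.mpr (Nat.factorial_ne_zero _))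
  have hNx0 : (((N - ∑ i, x i).factorial : ℕ) : ℝ) ≠ 0 :=
    Nat.cast_ne_zero.mpr (Nat.factorial_ne_zero _)
  have key : ((N.factorial : ℕ) : ℝ) / (F * (((N - ∑ i, x i).factorial : ℕ) : ℝ)) * A
        * S ^ (N - ∑ i, x i) * G * (P / (u * DN) * Q)
      = (A / F * G * P * Q) * (((N.factorial : ℕ) : ℝ) * S ^ (N - ∑ i, x i)
          / ((((N - ∑ i, x i).factorial : ℕ) : ℝ) * (u * DN))) := by ring
  rw [key, goal2, hNfac]
  field_simp

/-- The hypergeometric form (7.1) of the multivariable kernel: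
`K(x;y) = b_n(x;N;β) ∏_k (1-α_k)^{y_k} ∑_r [∏_i (-x_i)_{r_i}(-y_i)_{r_i}/r_i!]
  /(-N)_{∑r} ∏_i (α_i/(β_i(α_i-1)))^{r_i}`. -/
theorem stmt_18 (N n : ℕ) (hN : 0 < N) (hn : 0 < n) (α β : Fin n → ℝ)
    (hα : ∀ r, 0 < α r ∧ α r < 1) (hβ : ∀ r, 0 < β r) (hβs : ∑ r, β r < 1) :
    ∀ x y : Fin n → ℕ, ∑ r, x r ≤ N → ∑ r, y r ≤ N →
      Kn N α β x y
        = bn N x β * (∏ k, (1 - α k) ^ y k) *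
          ∑ r ∈ Finset.filter (fun r => ∑ i, r i ≤ N)
              (Fintype.piFinset fun _ : Fin n => Finset.range (N + 1)),
            (∏ i, poch (-(x i : ℝ)) (r i) * poch (-(y i : ℝ)) (r i) / ((r i).factorial : ℝ)) /
              poch (-(N : ℝ)) (∑ i, r i) *
              ∏ i, (α i / (β i * (α i - 1))) ^ r i := by
  intro x y hx hy
  rw [Kn, Finset.mul_sum]
  have hxr : ∀ r, x r ≤ N := fun r =>
    le_trans (Finset.single_le_sum (f := fun i => x i) (fun i _ => Nat.zero_le _)
      (Finset.mem_univ r)) hx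
  have hsubset : Fintype.piFinset (fun r => Finset.range (min (y r) (x r) + 1)) ⊆
      Finset.filter (fun r => ∑ i, r i ≤ N)
        (Fintype.piFinset fun _ : Fin n => Finset.range (N + 1)) := by
    intro k hk
    rw [Fintype.mem_piFinset] at hk
    have hb : ∀ r, k r ≤ min (y r) (x r) := fun r =>
      Nat.lt_succ_iff.mp (Finset.mem_range.mp (hk r))
    rw [Finset.mem_filter, Fintype.mem_piFinset]
    constructor
    · intro r
      rw [Finset.mem_range, Nat.lt_succ_iff]
      exact le_trans (hb r) (le_trans (min_le_right _ _) (hxr r))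
    · exact le_trans (Finset.sum_le_sum fun i _ =>
        le_trans (hb i) (min_le_right _ _)) hx
  have hzero : ∀ k ∈ Finset.filter (fun r => ∑ i, r i ≤ N)
        (Fintype.piFinset fun _ : Fin n => Finset.range (N + 1)),
      k ∉ Fintype.piFinset (fun r => Finset.range (min (y r) (x r) + 1)) →
      bn N x β * (∏ j, (1 - α j) ^ y j) *
        ((∏ i, poch (-(x i : ℝ)) (k i) * poch (-(y i : ℝ)) (k i) / ((k i).factorial : ℝ)) /
            poch (-(N : ℝ)) (∑ i, k i) *
          ∏ i, (α i / (β i * (α i - 1))) ^ k i) = 0 := by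
    intro k _ hk
    rw [Fintype.mem_piFinset] at hk
    push_neg at hk
    obtain ⟨r, hr⟩ := hk
    rw [Finset.mem_range, Nat.lt_succ_iff, not_le, min_lt_iff] at hr
    have hfac : poch (-(x r : ℝ)) (k r) * poch (-(y r : ℝ)) (k r) / ((k r).factorial : ℝ)
        = 0 := by
      rcases hr with hr | hr
      · rw [poch_neg_zero hr]; ring
      · rw [poch_neg_zero hr]; ring
    rw [Finset.prod_eq_zero (f := fun i =>
      poch (-(x i : ℝ)) (k i) * poch (-(y i : ℝ)) (k i) / (((k i).factorial : ℕ) : ℝ))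
      (Finset.mem_univ r) hfac]
    ring
  rw [← Finset.sum_subset hsubset hzero]
  apply Finset.sum_congr rfl
  intro k hk
  rw [Fintype.mem_piFinset] at hk
  have hb : ∀ r, k r ≤ min (y r) (x r) := fun r =>
    Nat.lt_succ_iff.mp (Finset.mem_range.mp (hk r))
  have := term_eq N n α β hα hβ x y k hx
    (fun i => le_trans (hb i) (min_le_right _ _))
    (fun i => le_trans (hb i) (min_le_left _ _))
  rw [this]
end

section
/- Let N and n be positive integers, 0 < α_r < 1 for r = 1,…,n, and β_r > 0 with β₁+⋯+β_n < 1. Define D_n = 1 + Σ_k α_kβ_k/(1−α_k) and η_k = β_k/((1−α_k)D_n). Then φ₀(i) = b_n(i;N;η) is a stationary distribution of the multivariable kernel: for every state i ∈ ℕⁿ with Σi_r ≤ N, Σ_j K(i;j)·φ₀(j) = φ₀(i), the sum over all j ∈ ℕⁿ with Σj_r ≤ N. -/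
open Finset

lemma fact_ne (m : ℕ) : ((m.factorial : ℝ)) ≠ 0 := Nat.cast_ne_zero.2 m.factorial_ne_zero

lemma prod_fact_ne {n : ℕ} (j : Fin n → ℕ) : (∏ r, ((j r).factorial : ℝ)) ≠ 0 :=
  Finset.prod_ne_zero_iff.2 fun r _ => fact_ne _

/-- The multinomial theorem, summed over tuples with sum at most `M`. -/
lemma MS (n M : ℕ) (x : Fin n → ℝ) (y : ℝ) :
    ∑ j ∈ (Fintype.piFinset fun _ : Fin n => Finset.range (M+1)).filter
        (fun j => ∑ r, j r ≤ M),
      (M.factorial : ℝ) / ((∏ r, ((j r).factorial : ℝ)) * (((M - ∑ r, j r).factorial : ℝ)))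
        * (∏ r, x r ^ j r) * y ^ (M - ∑ r, j r)
      = (∑ r, x r + y) ^ M := by
  have key : (∑ r, x r + y) = ∑ i : Fin (n+1), (Fin.cons y x) i := by
    rw [Fin.sum_univ_succ]; simp [add_comm]
  rw [key, Finset.sum_pow_eq_sum_piAntidiag]
  refine Finset.sum_nbij' (fun j => Fin.cons (M - ∑ r, j r) j) (fun k => Fin.tail k)
    ?_ ?_ ?_ ?_ ?_
  · intro j hj
    simp only [Finset.mem_filter, Fintype.mem_piFinset, Finset.mem_range] at hj
    simp only [Finset.mem_piAntidiag]
    refine ⟨?_, fun i _ => Finset.mem_univ i⟩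
    rw [Fin.sum_univ_succ]
    simp only [Fin.cons_zero, Fin.cons_succ]
    exact Nat.sub_add_cancel hj.2
  · intro k hk
    simp only [Finset.mem_piAntidiag] at hk
    have hsum : ∑ i, k i = M := hk.1
    have htail : ∑ r, Fin.tail k r ≤ M := by
      rw [← hsum, Fin.sum_univ_succ]; exact Nat.le_add_left _ _
    simp only [Finset.mem_filter, Fintype.mem_piFinset, Finset.mem_range]
    refine ⟨fun r => ?_, htail⟩
    have : Fin.tail k r ≤ ∑ r, Fin.tail k r :=
      Finset.single_le_sum (fun _ _ => Nat.zero_le _) (Finset.mem_univ r)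
    omega
  · intro j hj
    exact Fin.tail_cons _ _
  · intro k hk
    simp only [Finset.mem_piAntidiag] at hk
    have h0 : k 0 = M - ∑ r, Fin.tail k r := by
      have : k 0 + ∑ r, Fin.tail k r = M := by
        rw [← hk.1, Fin.sum_univ_succ]; rfl
      omega
    show Fin.cons (M - ∑ r, Fin.tail k r) (Fin.tail k) = k
    rw [← h0, Fin.cons_self_tail]
  · intro j hj
    simp only [Finset.mem_filter, Fintype.mem_piFinset, Finset.mem_range] at hj
    have hsum : ∑ i, (Fin.cons (M - ∑ r, j r) j : Fin (n+1) → ℕ) i = M := by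
      rw [Fin.sum_univ_succ]
      simp only [Fin.cons_zero, Fin.cons_succ]
      exact Nat.sub_add_cancel hj.2
    have hmult : ((Nat.multinomial Finset.univ (Fin.cons (M - ∑ r, j r) j) : ℕ) : ℝ)
        = (M.factorial : ℝ)
          / ∏ i, (((Fin.cons (M - ∑ r, j r) j : Fin (n+1) → ℕ) i).factorial : ℝ) := by
      rw [eq_div_iff (prod_fact_ne _), mul_comm]
      rw_mod_cast [Nat.multinomial_spec]
      rw [hsum]
    rw [hmult]
    rw [Fin.prod_univ_succ, Fin.prod_univ_succ]
    simp only [Fin.cons_zero, Fin.cons_succ]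
    ring

lemma binom_eq (a b : ℕ) (h : b ≤ a) (p : ℝ) :
    binom a b p
      = (a.factorial : ℝ)/((b.factorial:ℝ) * ((a-b).factorial:ℝ)) * p^b * (1-p)^(a-b) := by
  unfold binom; rw [Nat.cast_choose ℝ h]

/-- The thinning identity. -/
lemma lemA (n N : ℕ) (α η : Fin n → ℝ) (k : Fin n → ℕ) (hk : ∑ r, k r ≤ N) :
    ∑ j ∈ (Fintype.piFinset fun _ : Fin n => Finset.range (N+1)).filter
        (fun j => ∑ r, j r ≤ N),
      (∏ r, binom (j r) (k r) (α r)) * bn N j η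
    = bn N k (fun r => α r * η r) := by
  classical
  set M := N - ∑ r, k r with hM
  rw [← Finset.sum_filter_of_ne
    (p := fun j => ∀ r, k r ≤ j r)
    (by
      intro j hj hne
      by_contra hcon
      push_neg at hcon
      obtain ⟨r, hr⟩ := hcon
      apply hne
      have : binom (j r) (k r) (α r) = 0 := by
        unfold binom
        rw [Nat.choose_eq_zero_of_lt hr]
        simp
      rw [Finset.prod_eq_zero (Finset.mem_univ r) this, zero_mul])]
  have key : ∑ j ∈ ((Fintype.piFinset fun _ : Fin n => Finset.range (N+1)).filter
        (fun j => ∑ r, j r ≤ N)).filter (fun j => ∀ r, k r ≤ j r),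
      (∏ r, binom (j r) (k r) (α r)) * bn N j η
    = ∑ m ∈ (Fintype.piFinset fun _ : Fin n => Finset.range (M+1)).filter
        (fun m => ∑ r, m r ≤ M),
      ((N.factorial : ℝ) / ((∏ r, ((k r).factorial : ℝ)) * (M.factorial : ℝ))
          * ∏ r, (α r * η r) ^ k r)
        * ((M.factorial : ℝ) / ((∏ r, ((m r).factorial : ℝ))
              * (((M - ∑ r, m r).factorial : ℝ)))
            * (∏ r, ((1 - α r) * η r) ^ m r) * (1 - ∑ r, η r) ^ (M - ∑ r, m r)) := by
    refine Finset.sum_nbij' (fun j => fun r => j r - k r) (fun m => fun r => k r + m r)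
      ?_ ?_ ?_ ?_ ?_
    · intro j hj
      simp only [Finset.mem_filter, Fintype.mem_piFinset, Finset.mem_range] at hj ⊢
      obtain ⟨⟨hj1, hj2⟩, hj3⟩ := hj
      have hsum : ∑ r, (j r - k r) = ∑ r, j r - ∑ r, k r := by
        rw [eq_tsub_iff_add_eq_of_le (Finset.sum_le_sum fun r _ => hj3 r),
          ← Finset.sum_add_distrib]
        exact Finset.sum_congr rfl fun r _ => Nat.sub_add_cancel (hj3 r)
      constructor
      · intro r
        have h1 : j r - k r ≤ ∑ r, (j r - k r) :=
          Finset.single_le_sum (f := fun r => j r - k r) (fun _ _ => Nat.zero_le _)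
            (Finset.mem_univ r)
        rw [hsum] at h1
        omega
      · rw [hsum]; omega
    · intro m hm
      simp only [Finset.mem_filter, Fintype.mem_piFinset, Finset.mem_range] at hm ⊢
      obtain ⟨hm1, hm2⟩ := hm
      have hsum : ∑ r, (k r + m r) = ∑ r, k r + ∑ r, m r := Finset.sum_add_distrib
      have hkr : ∀ r, k r ≤ ∑ r, k r :=
        fun r => Finset.single_le_sum (fun _ _ => Nat.zero_le _) (Finset.mem_univ r)
      refine ⟨⟨fun r => ?_, ?_⟩, fun r => Nat.le_add_right _ _⟩
      · have := hm1 r; have := hkr r; omega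
      · rw [hsum]; omega
    · intro j hj; funext r
      simp only [Finset.mem_filter] at hj
      exact Nat.add_sub_cancel' (hj.2 r)
    · intro m hm; funext r
      exact Nat.add_sub_cancel_left _ _
    · intro j hj
      simp only [Finset.mem_filter, Fintype.mem_piFinset, Finset.mem_range] at hj
      obtain ⟨⟨hj1, hj2⟩, hj3⟩ := hj
      have hsum : ∑ r, (j r - k r) = ∑ r, j r - ∑ r, k r := by
        rw [eq_tsub_iff_add_eq_of_le (Finset.sum_le_sum fun r _ => hj3 r),
          ← Finset.sum_add_distrib]
        exact Finset.sum_congr rfl fun r _ => Nat.sub_add_cancel (hj3 r)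
      have hks : ∑ r, k r ≤ ∑ r, j r := Finset.sum_le_sum fun r _ => hj3 r
      have hMm : M - ∑ r, (j r - k r) = N - ∑ r, j r := by
        rw [hsum, hM]; omega
      unfold bn
      rw [Finset.prod_congr rfl (fun r _ => binom_eq (j r) (k r) (hj3 r) (α r))]
      have hprod1 : ∏ r, ((j r).factorial : ℝ)/(((k r).factorial:ℝ)
            * (((j r - k r).factorial:ℝ))) * (α r)^(k r) * (1 - α r)^(j r - k r)
          = ((∏ r, ((j r).factorial : ℝ)) / ((∏ r, ((k r).factorial : ℝ))
              * (∏ r, ((j r - k r).factorial : ℝ))))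
            * (∏ r, (α r)^(k r)) * (∏ r, (1 - α r)^(j r - k r)) := by
        simp only [Finset.prod_mul_distrib, Finset.prod_div_distrib]
      rw [hprod1]
      have hηsplit : ∏ r, η r ^ j r = (∏ r, η r ^ k r) * ∏ r, η r ^ (j r - k r) := by
        rw [← Finset.prod_mul_distrib]
        exact Finset.prod_congr rfl fun r _ => by
          rw [← pow_add]; congr 1; have := hj3 r; omega
      rw [hηsplit]
      have hpow : (∏ r, (α r * η r) ^ k r) = (∏ r, (α r)^(k r)) * ∏ r, η r ^ k r := by
        rw [← Finset.prod_mul_distrib]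
        exact Finset.prod_congr rfl fun r _ => mul_pow _ _ _
      have hpow2 : (∏ r, ((1 - α r) * η r) ^ (j r - k r))
          = (∏ r, (1 - α r)^(j r - k r)) * ∏ r, η r ^ (j r - k r) := by
        rw [← Finset.prod_mul_distrib]
        exact Finset.prod_congr rfl fun r _ => mul_pow _ _ _
      rw [hMm, hpow, hpow2]
      have hMfact : (M.factorial : ℝ) ≠ 0 := fact_ne _
      field_simp
  rw [key, ← Finset.mul_sum, MS]
  have hxy : (∑ r, (1 - α r) * η r) + (1 - ∑ r, η r) = 1 - ∑ r, α r * η r := by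
    have : ∑ r, (1 - α r) * η r = ∑ r, η r - ∑ r, α r * η r := by
      rw [← Finset.sum_sub_distrib]
      exact Finset.sum_congr rfl fun r _ => by ring
    rw [this]; ring
  rw [hxy]
  unfold bn
  ring

lemma binsum (a : ℕ) (u v : ℝ) :
    ∑ t ∈ Finset.range (a+1),
      u^t * v^(a-t) / ((t.factorial : ℝ) * ((a-t).factorial : ℝ))
    = (u+v)^a / (a.factorial : ℝ) := by
  rw [add_pow, Finset.sum_div]
  refine Finset.sum_congr rfl fun t ht => ?_
  rw [Nat.cast_choose ℝ (Finset.mem_range_succ_iff.mp ht)]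
  have h1 := fact_ne t
  have h2 := fact_ne (a - t)
  have h3 := fact_ne a
  field_simp

/-- The composition identity. -/
lemma lemB (n N : ℕ) (β γ : Fin n → ℝ) (i : Fin n → ℕ) (hi : ∑ r, i r ≤ N) :
    ∑ k ∈ Fintype.piFinset (fun r => Finset.range (i r + 1)),
      bn (N - ∑ r, k r) (fun r => i r - k r) β * bn N k γ
    = bn N i (fun r => γ r + (1 - ∑ r, γ r) * β r) := by
  classical
  set c : ℝ := 1 - ∑ r, γ r with hc
  set S := ∑ r, i r with hS
  have key : ∀ k ∈ Fintype.piFinset (fun r => Finset.range (i r + 1)),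
      bn (N - ∑ r, k r) (fun r => i r - k r) β * bn N k γ
      = ((N.factorial : ℝ) / ((N - S).factorial : ℝ) * (c * (1 - ∑ r, β r)) ^ (N - S))
        * ∏ r, (γ r ^ (k r) * (c * β r) ^ (i r - k r)
            / (((k r).factorial : ℝ) * (((i r - k r).factorial : ℝ)))) := by
    intro k hk
    simp only [Fintype.mem_piFinset, Finset.mem_range] at hk
    have hkr : ∀ r, k r ≤ i r := fun r => by have := hk r; omega
    have hks : ∑ r, k r ≤ S := Finset.sum_le_sum fun r _ => hkr r
    have hsm : ∑ r, (i r - k r) = S - ∑ r, k r := by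
      rw [eq_tsub_iff_add_eq_of_le hks, ← Finset.sum_add_distrib]
      exact Finset.sum_congr rfl fun r _ => Nat.sub_add_cancel (hkr r)
    unfold bn
    rw [hsm]
    have h2' : N - ∑ r, k r - (S - ∑ r, k r) = N - S := by omega
    rw [h2']
    have hcpow : c ^ (N - ∑ r, k r) = c ^ (S - ∑ r, k r) * c ^ (N - S) := by
      rw [← pow_add]; congr 1; omega
    have hsplit : ∏ r, (γ r ^ (k r) * (c * β r) ^ (i r - k r)
            / (((k r).factorial : ℝ) * (((i r - k r).factorial : ℝ))))
        = ((∏ r, γ r ^ k r) * (c ^ (S - ∑ r, k r) * ∏ r, β r ^ (i r - k r)))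
          / ((∏ r, ((k r).factorial : ℝ)) * (∏ r, ((i r - k r).factorial : ℝ))) := by
      simp only [Finset.prod_div_distrib, Finset.prod_mul_distrib, mul_pow]
      rw [Finset.prod_pow_eq_pow_sum, hsm]
    rw [hsplit, hcpow, mul_pow]
    have e1 := prod_fact_ne k
    have e2 := prod_fact_ne (fun r => i r - k r)
    have e3 := fact_ne (N - S)
    have e4 := fact_ne (N - ∑ r, k r)
    field_simp
  rw [Finset.sum_congr rfl key, ← Finset.mul_sum,
    ← Finset.prod_univ_sum (t := fun r => Finset.range (i r + 1))
      (f := fun r t => γ r ^ t * (c * β r) ^ (i r - t)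
        / (((t).factorial : ℝ) * (((i r - t).factorial : ℝ))))]
  have hco : ∀ r, ∑ t ∈ Finset.range (i r + 1),
      (γ r ^ t * (c * β r) ^ (i r - t)
        / (((t).factorial : ℝ) * (((i r - t).factorial : ℝ))))
      = (γ r + c * β r) ^ (i r) / ((i r).factorial : ℝ) := fun r => binsum (i r) _ _
  rw [Finset.prod_congr rfl fun r _ => hco r]
  unfold bn
  have hδ : 1 - ∑ r, (γ r + c * β r) = c * (1 - ∑ r, β r) := by
    rw [Finset.sum_add_distrib, ← Finset.mul_sum, hc]
    ring
  rw [hδ]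
  rw [Finset.prod_div_distrib]
  have e1 := prod_fact_ne i
  have e3 := fact_ne (N - S)
  rw [hS] at *
  field_simp

/-- `φ₀(i) = b_n(i;N;η)` is a stationary distribution of the multivariable
kernel: `∑_j K(i;j) φ₀(j) = φ₀(i)`. -/
theorem stmt_19 (N n : ℕ) (hN : 0 < N) (hn : 0 < n) (α β : Fin n → ℝ)
    (hα : ∀ r, 0 < α r ∧ α r < 1) (hβ : ∀ r, 0 < β r) (hβs : ∑ r, β r < 1)
    (D : ℝ) (hD : D = 1 + ∑ k, α k * β k / (1 - α k))
    (η : Fin n → ℝ) (hη : ∀ k, η k = β k / ((1 - α k) * D)) :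
    ∀ i : Fin n → ℕ, ∑ r, i r ≤ N →
      ∑ j ∈ Finset.filter (fun j => ∑ r, j r ≤ N)
          (Fintype.piFinset fun _ : Fin n => Finset.range (N + 1)),
        Kn N α β i j * bn N j η = bn N i η := by
  intro i hi
  classical
  -- algebraic preliminaries
  have h1α : ∀ r, (0:ℝ) < 1 - α r := fun r => by have := (hα r).2; linarith
  have h1αne : ∀ r, (1:ℝ) - α r ≠ 0 := fun r => ne_of_gt (h1α r)
  have hDpos : 0 < D := by
    rw [hD]
    have : (0:ℝ) ≤ ∑ k, α k * β k / (1 - α k) :=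
      Finset.sum_nonneg fun k _ =>
        div_nonneg (mul_nonneg (le_of_lt (hα k).1) (le_of_lt (hβ k))) (le_of_lt (h1α k))
    linarith
  have hDne : D ≠ 0 := ne_of_gt hDpos
  have hαη : ∑ r, α r * η r = 1 - 1/D := by
    have h1 : ∀ r ∈ Finset.univ, α r * η r = (α r * β r / (1 - α r))/D := by
      intro r _
      rw [hη r]
      field_simp
    rw [Finset.sum_congr rfl h1, ← Finset.sum_div]
    have h2 : ∑ r, α r * β r / (1 - α r) = D - 1 := by rw [hD]; ring
    rw [h2]
    field_simp
  have hE1 : ∀ r, α r * η r + (1 - ∑ s, α s * η s) * β r = η r := by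
    intro r
    rw [hαη, hη r]
    have := h1αne r
    field_simp
    ring
  -- Step 1: extend the inner sum of the kernel
  have hKnrw : ∀ j : Fin n → ℕ,
      Kn N α β i j
      = ∑ k ∈ Fintype.piFinset (fun r => Finset.range (i r + 1)),
          (∏ r, binom (j r) (k r) (α r)) * bn (N - ∑ r, k r) (fun r => i r - k r) β := by
    intro j
    unfold Kn
    refine Finset.sum_subset ?_ ?_
    · refine Fintype.piFinset_subset _ _ fun r => ?_
      refine Finset.range_subset_range.2 ?_
      have := min_le_right (j r) (i r)
      omega
    · intro x hx hnx
      simp only [Fintype.mem_piFinset, Finset.mem_range] at hx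
      have : ∃ r, ¬ x r < min (j r) (i r) + 1 := by
        by_contra hcon
        push_neg at hcon
        exact hnx (Fintype.mem_piFinset.2 fun r => Finset.mem_range.2 (hcon r))
      obtain ⟨r, hr⟩ := this
      have hxr := hx r
      have hjr : j r < x r := by omega
      have : binom (j r) (x r) (α r) = 0 := by
        unfold binom
        rw [Nat.choose_eq_zero_of_lt hjr]
        simp
      rw [Finset.prod_eq_zero (Finset.mem_univ r) this, zero_mul]
  -- Step 2: swap sums and apply lemA then lemB
  calc ∑ j ∈ Finset.filter (fun j => ∑ r, j r ≤ N)
          (Fintype.piFinset fun _ : Fin n => Finset.range (N + 1)),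
        Kn N α β i j * bn N j η
      = ∑ j ∈ Finset.filter (fun j => ∑ r, j r ≤ N)
          (Fintype.piFinset fun _ : Fin n => Finset.range (N + 1)),
          ∑ k ∈ Fintype.piFinset (fun r => Finset.range (i r + 1)),
            ((∏ r, binom (j r) (k r) (α r)) * bn N j η)
              * bn (N - ∑ r, k r) (fun r => i r - k r) β := by
        refine Finset.sum_congr rfl fun j hj => ?_
        rw [hKnrw j, Finset.sum_mul]
        exact Finset.sum_congr rfl fun k hk => by ring
    _ = ∑ k ∈ Fintype.piFinset (fun r => Finset.range (i r + 1)),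
          ∑ j ∈ Finset.filter (fun j => ∑ r, j r ≤ N)
            (Fintype.piFinset fun _ : Fin n => Finset.range (N + 1)),
            ((∏ r, binom (j r) (k r) (α r)) * bn N j η)
              * bn (N - ∑ r, k r) (fun r => i r - k r) β := Finset.sum_comm
    _ = ∑ k ∈ Fintype.piFinset (fun r => Finset.range (i r + 1)),
          bn (N - ∑ r, k r) (fun r => i r - k r) β
            * bn N k (fun r => α r * η r) := by
        refine Finset.sum_congr rfl fun k hk => ?_
        simp only [Fintype.mem_piFinset, Finset.mem_range] at hk
        have hkN : ∑ r, k r ≤ N := by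
          calc ∑ r, k r ≤ ∑ r, i r := Finset.sum_le_sum fun r _ => by have := hk r; omega
            _ ≤ N := hi
        rw [← Finset.sum_mul, lemA n N α η k hkN, mul_comm]
    _ = bn N i (fun r => α r * η r + (1 - ∑ s, α s * η s) * β r) :=
        lemB n N β (fun r => α r * η r) i hi
    _ = bn N i η := by rw [funext hE1]
end
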